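/- arXiv:2208.09442 — 2 statements merged into one kernel-verified Lean document; each statement's English description precedes it below -/
import Mathlib

section
/- Let Y be a Young diagram with n boxes, and for each box (i,j) ∈ Y define the arm length a(□) = #{j' > j : (i,j') ∈ Y} and leg length l(□) = #{i' > i : (i',j) ∈ Y}. Then in the character T(V) = V + V* u₁u₂ − V·V*(1−u₁)(1−u₂), where V = ∑_{(i,j)∈Y} u₁^{−i} u₂^{−j}, the result equals ∑_{□∈Y} u₁^{−l(□)} u₂^{a(□)+1} + ∑_{□∈Y} u₁^{l(□)+1} u₂^{−a(□)}. -/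
/-! Induct on the number of rows. Write `V = R + u₁⁻¹ V'`, where `R = ∑_{j<w} u₂^{-j}` is the
top row (of length `w`) and `V'` the character of the diagram below it. The cross terms of the
quadratic expression `T(V) = V + V* u₁u₂ − V V* (1−u₁)(1−u₂)` collapse because
`R* (1 − u₂) = 1 − u₂^w` and `u₂^{w−1} R = R*`, leaving
`T(V) = T(V') + u₂^w C + u₁ u₂^{1−w} C*` with `C = R + (u₁⁻¹ − 1) V'`. Summing `V'` column by
column telescopes `C` to `∑_{j<w} u₁^{-l_j} u₂^{-j}`, where `l_j` is the leg of the top-row box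
`(0, j)`, so the two extra terms are exactly the contribution of the top row; the boxes below it
keep their arms and legs. -/

open scoped AddMonoidAlgebra

/-- The Laurent polynomial ring `ℤ[u₁^{±1}, u₂^{±1}]`, realized as the group
algebra of `ℤ × ℤ` over `ℤ`. -/
noncomputable abbrev Laurent2 : Type := AddMonoidAlgebra ℤ (ℤ × ℤ)

/-- The monomial `u₁^p * u₂^q`. -/
noncomputable def mono (p q : ℤ) : Laurent2 := AddMonoidAlgebra.single (p, q) 1

/-- The involution `u_i ↦ u_i⁻¹`. -/
noncomputable def star2 (f : Laurent2) : Laurent2 :=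
  AddMonoidAlgebra.ofCoeff (Finsupp.mapDomain (fun p => -p) f.coeff)

/-- Arm length of the box `(i, j)` in the Young diagram `Y`:
`a(□) = #{j' > j | (i, j') ∈ Y}`. -/
def armLen (Y : YoungDiagram) (c : ℕ × ℕ) : ℕ := Y.rowLen c.1 - c.2 - 1

/-- Leg length of the box `(i, j)` in the Young diagram `Y`:
`l(□) = #{i' > i | (i', j) ∈ Y}`. -/
def legLen (Y : YoungDiagram) (c : ℕ × ℕ) : ℕ := Y.colLen c.2 - c.1 - 1

/-- The character `V = ∑_{(i,j) ∈ Y} u₁^{-i} u₂^{-j}`. -/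
noncomputable def charV (Y : YoungDiagram) : Laurent2 :=
  ∑ c ∈ Y.cells, mono (-(c.1 : ℤ)) (-(c.2 : ℤ))

open Finset

lemma mono_mul_mono (p q p' q' : ℤ) : mono p q * mono p' q' = mono (p + p') (q + q') := by
  simp [mono, AddMonoidAlgebra.single_mul_single]

lemma mono_zero_zero : mono 0 0 = 1 := rfl

noncomputable def star2RingHom : Laurent2 →+* Laurent2 :=
  AddMonoidAlgebra.mapDomainRingHom ℤ negAddMonoidHom

lemma star2_add (f g : Laurent2) : star2 (f + g) = star2 f + star2 g := map_add star2RingHom f g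
lemma star2_sub (f g : Laurent2) : star2 (f - g) = star2 f - star2 g := map_sub star2RingHom f g
lemma star2_mul (f g : Laurent2) : star2 (f * g) = star2 f * star2 g := map_mul star2RingHom f g
lemma star2_zero : star2 0 = 0 := map_zero star2RingHom
lemma star2_one : star2 1 = 1 := map_one star2RingHom
lemma star2_sum {ι : Type*} (s : Finset ι) (f : ι → Laurent2) :
    star2 (∑ i ∈ s, f i) = ∑ i ∈ s, star2 (f i) :=
  map_sum star2RingHom f s

lemma star2_mono (p q : ℤ) : star2 (mono p q) = mono (-p) (-q) := by
  simp [star2, mono]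

noncomputable def rowChar (w : ℕ) : Laurent2 := ∑ j ∈ range w, mono 0 (-(j : ℤ))

lemma star2_rowChar (w : ℕ) : star2 (rowChar w) = ∑ j ∈ range w, mono 0 (j : ℤ) := by
  simp [rowChar, star2_sum, star2_mono]

lemma star2_rowChar_mul_one_sub (w : ℕ) :
    star2 (rowChar w) * (1 - mono 0 1) = 1 - mono 0 w := by
  calc star2 (rowChar w) * (1 - mono 0 1)
      = ∑ j ∈ range w, (mono 0 (j : ℤ) - mono 0 ((j + 1 : ℕ) : ℤ)) := by
        rw [star2_rowChar, sum_mul]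
        refine sum_congr rfl fun j _ => ?_
        rw [mul_sub, mul_one, mono_mul_mono, zero_add, Nat.cast_succ]
    _ = 1 - mono 0 w := by
        rw [sum_range_sub' (fun j : ℕ => mono 0 (j : ℤ)), Nat.cast_zero, mono_zero_zero]

lemma mono_mul_rowChar (w : ℕ) : mono 0 ((w : ℤ) - 1) * rowChar w = star2 (rowChar w) := by
  rw [star2_rowChar, rowChar, mul_sum, ← sum_range_reflect]
  refine sum_congr rfl fun j hj => ?_
  have hjw : j < w := mem_range.mp hj
  rw [mono_mul_mono, zero_add, Nat.cast_sub (by omega), Nat.cast_sub (by omega)]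
  ring_nf

noncomputable def tangentChar (V : Laurent2) : Laurent2 :=
  V + star2 V * mono 1 1 - V * star2 V * (1 - mono 1 0) * (1 - mono 0 1)

lemma tangentChar_rowChar_add (w : ℕ) (V : Laurent2) :
    tangentChar (rowChar w + mono (-1) 0 * V) =
      tangentChar V + mono 0 w * (rowChar w + (mono (-1) 0 - 1) * V) +
        mono 1 (1 - w) * star2 (rowChar w + (mono (-1) 0 - 1) * V) := by
  have h1 : mono 1 0 * mono (-1) 0 = 1 := by rw [mono_mul_mono]; rfl
  have h2 := star2_rowChar_mul_one_sub w
  have hR := mono_mul_rowChar w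
  have hP : mono 0 w = mono 0 1 * mono 0 ((w : ℤ) - 1) := by rw [mono_mul_mono]; ring_nf
  have hQ : mono 0 (1 - w) * mono 0 ((w : ℤ) - 1) = 1 := by rw [mono_mul_mono]; ring_nf; rfl
  have hxy : mono 1 1 = mono 1 0 * mono 0 1 := by rw [mono_mul_mono]; rfl
  have hxQ : mono 1 (1 - w) = mono 1 0 * mono 0 (1 - w) := by rw [mono_mul_mono]; ring_nf
  simp only [tangentChar, star2_add, star2_mul, star2_sub, star2_mono, star2_one, neg_neg, neg_zero]
  rw [hxy, hxQ]
  generalize mono 1 0 = x, mono (-1) 0 = xb, mono 0 1 = y, mono 0 (w : ℤ) = P,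
    mono 0 (1 - (w : ℤ)) = Q, mono 0 ((w : ℤ) - 1) = M, rowChar w = R, star2 (rowChar w) = Rs,
    star2 V = Vs at *
  linear_combination (-V * Vs * (1 - x) * (1 - y) + V * (1 - P)) * h1
    + (-(1 - x) * R - xb * V * (1 - x) - x * Vs * (1 - x) * Q) * h2
    + (-x * y - x * Vs * (1 - x) * (1 - y) * Q + x * Q) * hR
    + (-x * R + x * Vs * (1 - x) * Q) * hP
    + (-x * R + x * Vs * (1 - x) * ((1 - y) * R + y)) * hQ

namespace YoungDiagram

variable (Y : YoungDiagram)

lemma sum_cells_eq_sum_rows {M : Type*} [AddCommMonoid M] {n : ℕ} (hn : Y.colLen 0 ≤ n)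
    (f : ℕ × ℕ → M) :
    ∑ c ∈ Y.cells, f c = ∑ i ∈ range n, ∑ j ∈ range (Y.rowLen i), f (i, j) := by
  refine sum_finset_product _ _ _ fun c => ?_
  rw [mem_cells, mem_range, mem_range, ← mem_iff_lt_rowLen]
  refine ⟨fun hc => ⟨?_, hc⟩, And.right⟩
  exact hn.trans_lt' (mem_iff_lt_colLen.mp (Y.up_left_mem le_rfl (Nat.zero_le c.2) hc))

lemma sum_cells_eq_sum_cols {M : Type*} [AddCommMonoid M] {n : ℕ} (hn : Y.rowLen 0 ≤ n)
    (f : ℕ × ℕ → M) :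
    ∑ c ∈ Y.cells, f c = ∑ j ∈ range n, ∑ i ∈ range (Y.colLen j), f (i, j) := by
  refine sum_finset_product_right _ _ _ fun c => ?_
  rw [mem_cells, mem_range, mem_range, ← mem_iff_lt_colLen]
  refine ⟨fun hc => ⟨?_, hc⟩, And.right⟩
  exact hn.trans_lt' (mem_iff_lt_rowLen.mp (Y.up_left_mem (Nat.zero_le c.1) le_rfl hc))

noncomputable def dropFirstRow : YoungDiagram where
  cells := Y.cells.preimage (Prod.map (· + 1) id)
    (Prod.map_injective.2 ⟨add_left_injective 1, Function.injective_id⟩).injOn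
  isLowerSet c d hdc hc := by
    simp only [coe_preimage, Set.mem_preimage, mem_coe, mem_cells] at hc ⊢
    exact Y.up_left_mem (Nat.add_le_add_right hdc.1 1) hdc.2 hc

lemma mem_dropFirstRow {i j : ℕ} : (i, j) ∈ Y.dropFirstRow ↔ (i + 1, j) ∈ Y := by
  simp [← mem_cells, dropFirstRow]

lemma rowLen_dropFirstRow (i : ℕ) : Y.dropFirstRow.rowLen i = Y.rowLen (i + 1) :=
  eq_of_forall_lt_iff fun j => by
    rw [← mem_iff_lt_rowLen, ← mem_iff_lt_rowLen, mem_dropFirstRow]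

lemma colLen_dropFirstRow (j : ℕ) : Y.dropFirstRow.colLen j = Y.colLen j - 1 :=
  eq_of_forall_lt_iff fun i => by
    rw [← mem_iff_lt_colLen, mem_dropFirstRow, mem_iff_lt_colLen]
    omega

lemma sum_cells_eq_sum_first_row_add {M : Type*} [AddCommMonoid M] (f : ℕ × ℕ → M) :
    ∑ c ∈ Y.cells, f c =
      ∑ j ∈ range (Y.rowLen 0), f (0, j) + ∑ c ∈ Y.dropFirstRow.cells, f (c.1 + 1, c.2) := by
  rw [Y.sum_cells_eq_sum_rows (n := Y.colLen 0 + 1) (by omega), sum_range_succ',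
    Y.dropFirstRow.sum_cells_eq_sum_rows (n := Y.colLen 0) (by simp [colLen_dropFirstRow])]
  simp only [rowLen_dropFirstRow, add_comm]

end YoungDiagram

open YoungDiagram

noncomputable def armLegChar (Y : YoungDiagram) : Laurent2 :=
  ∑ c ∈ Y.cells, (mono (-(legLen Y c : ℤ)) ((armLen Y c : ℤ) + 1) +
    mono ((legLen Y c : ℤ) + 1) (-(armLen Y c : ℤ)))

lemma armLen_dropFirstRow (Y : YoungDiagram) (c : ℕ × ℕ) :
    armLen Y.dropFirstRow c = armLen Y (c.1 + 1, c.2) := by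
  simp [armLen, rowLen_dropFirstRow]

lemma legLen_dropFirstRow (Y : YoungDiagram) (c : ℕ × ℕ) :
    legLen Y.dropFirstRow c = legLen Y (c.1 + 1, c.2) := by
  simp only [legLen, colLen_dropFirstRow]
  omega

lemma charV_eq_rowChar_add (Y : YoungDiagram) :
    charV Y = rowChar (Y.rowLen 0) + mono (-1) 0 * charV Y.dropFirstRow := by
  rw [charV, Y.sum_cells_eq_sum_first_row_add, charV, mul_sum, rowChar]
  refine congrArg₂ (· + ·) (by simp) (sum_congr rfl fun c _ => ?_)
  rw [mono_mul_mono]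
  push_cast
  ring_nf

noncomputable def colLenChar (Y : YoungDiagram) (w : ℕ) : Laurent2 :=
  ∑ j ∈ range w, mono (-(Y.colLen j : ℤ)) (-(j : ℤ))

lemma rowChar_add_mul_charV (Y : YoungDiagram) {w : ℕ} (hw : Y.rowLen 0 ≤ w) :
    rowChar w + (mono (-1) 0 - 1) * charV Y = colLenChar Y w := by
  rw [charV, Y.sum_cells_eq_sum_cols hw, rowChar, colLenChar, mul_sum, ← sum_add_distrib]
  refine sum_congr rfl fun j _ => ?_
  have telescope := sum_range_sub (fun i : ℕ => mono (-(i : ℤ)) (-(j : ℤ))) (Y.colLen j)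
  rw [Nat.cast_zero, neg_zero] at telescope
  rw [mul_sum, ← eq_sub_iff_add_eq', ← telescope]
  refine sum_congr rfl fun i _ => ?_
  rw [sub_mul, one_mul, mono_mul_mono]
  push_cast
  ring_nf

lemma armLegChar_eq_dropFirstRow_add (Y : YoungDiagram) :
    armLegChar Y = armLegChar Y.dropFirstRow +
      mono 0 (Y.rowLen 0) * colLenChar Y.dropFirstRow (Y.rowLen 0) +
      mono 1 (1 - Y.rowLen 0) * star2 (colLenChar Y.dropFirstRow (Y.rowLen 0)) := by
  rw [armLegChar, Y.sum_cells_eq_sum_first_row_add, armLegChar, add_comm, add_assoc, colLenChar]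
  simp only [armLen_dropFirstRow, legLen_dropFirstRow]
  congr 1
  rw [star2_sum, mul_sum, mul_sum, ← sum_add_distrib]
  refine sum_congr rfl fun j hj => ?_
  have hjw : j < Y.rowLen 0 := mem_range.mp hj
  have harm : (armLen Y (0, j) : ℤ) = Y.rowLen 0 - j - 1 := by
    simp only [armLen]; omega
  have hleg : legLen Y (0, j) = Y.dropFirstRow.colLen j := by
    simp only [legLen, colLen_dropFirstRow]; omega
  rw [harm, hleg, star2_mono, mono_mul_mono, mono_mul_mono]
  ring_nf

lemma tangentChar_charV (Y : YoungDiagram) : tangentChar (charV Y) = armLegChar Y := by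
  induction h : Y.colLen 0 generalizing Y with
  | zero =>
    have hV : charV Y = 0 := by simp [charV, Y.sum_cells_eq_sum_rows h.le]
    have hT : armLegChar Y = 0 := by simp [armLegChar, Y.sum_cells_eq_sum_rows h.le]
    rw [tangentChar, hV, hT, star2_zero]
    ring
  | succ n ih =>
    have hrow : Y.dropFirstRow.rowLen 0 ≤ Y.rowLen 0 := by
      rw [rowLen_dropFirstRow]; exact Y.rowLen_anti 0 1 zero_le_one
    rw [charV_eq_rowChar_add, tangentChar_rowChar_add, ih _ (by simp [colLen_dropFirstRow, h]),
      rowChar_add_mul_charV _ hrow, armLegChar_eq_dropFirstRow_add Y]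

/-- **Tangent space character of the Hilbert scheme of points at a monomial
ideal fixed point.**  For `V = ∑_{(i,j)∈Y} u₁^{-i}u₂^{-j}`,
`T(V) = V + V* u₁u₂ − V V* (1−u₁)(1−u₂)
      = ∑_{□∈Y} u₁^{-l(□)} u₂^{a(□)+1} + ∑_{□∈Y} u₁^{l(□)+1} u₂^{-a(□)}`. -/
theorem tangent_character_hilbert_scheme (Y : YoungDiagram) :
    charV Y + star2 (charV Y) * mono 1 1
        - charV Y * star2 (charV Y) * (1 - mono 1 0) * (1 - mono 0 1) =
      (∑ c ∈ Y.cells, mono (-(legLen Y c : ℤ)) ((armLen Y c : ℤ) + 1)) +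
        ∑ c ∈ Y.cells, mono ((legLen Y c : ℤ) + 1) (-(armLen Y c : ℤ)) := by
  rw [← sum_add_distrib]
  exact tangentChar_charV Y
end

section
/- Torus fixed points of the Hilbert scheme of n points on ℂ² biject with partitions of n: a rank-1 stable ADHM datum (X, Y, I) with J = 0 fixed under the torus action (X,Y) ↦ (aX, bY) (up to GL_n conjugation) corresponds uniquely to a monomial ideal of colength n in ℂ[x,y], equivalently a Young diagram with n boxes; moreover ℂ^n decomposes as ⊕_{(i,j)∈Y} ℂ·e_{i,j} with X e_{i,j} = e_{i+1,j}, Y e_{i,j} = e_{i,j+1} (with e_{i,j} = 0 outside Y) and I(1) = e_{0,0}. -/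
/-- Rank-one ADHM data on `ℂⁿ` (with `J = 0`): a pair of endomorphisms
`X, Y` and a framing vector `I(1) ∈ ℂⁿ`. -/
abbrev ADHMRep (n : ℕ) : Type :=
  ((Fin n → ℂ) →ₗ[ℂ] (Fin n → ℂ)) × ((Fin n → ℂ) →ₗ[ℂ] (Fin n → ℂ)) × (Fin n → ℂ)

/-- The ADHM equation `[X,Y] = 0` together with the stability condition
`ℂ⟨X,Y⟩ Im(I) = ℂⁿ`. -/
def IsStableADHM {n : ℕ} (d : ADHMRep n) : Prop :=
  d.1 ∘ₗ d.2.1 = d.2.1 ∘ₗ d.1 ∧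
    ∀ W : Submodule ℂ (Fin n → ℂ), d.2.2 ∈ W →
      (∀ v ∈ W, d.1 v ∈ W) → (∀ v ∈ W, d.2.1 v ∈ W) → W = ⊤

/-- The `GL_n`-conjugation relation on ADHM data. -/
def adhmRel (n : ℕ) : ADHMRep n → ADHMRep n → Prop := fun x y =>
  ∃ g : (Fin n → ℂ) ≃ₗ[ℂ] (Fin n → ℂ),
    y.1 = g.toLinearMap ∘ₗ x.1 ∘ₗ g.symm.toLinearMap ∧
      y.2.1 = g.toLinearMap ∘ₗ x.2.1 ∘ₗ g.symm.toLinearMap ∧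
      y.2.2 = g x.2.2

/-- The space of `GL_n`-orbits of rank-one ADHM data (the ambient set in
which the Hilbert scheme `Hilbⁿ(ℂ²)` sits as the stable locus). -/
abbrev ADHMModuli (n : ℕ) : Type := Quot (adhmRel n)

/-- The action of the two-torus: `(X, Y, I) ↦ (aX, bY, I)`. -/
noncomputable def scaleADHM {n : ℕ} (a b : ℂˣ) (x : ADHMRep n) : ADHMRep n :=
  ((a : ℂ) • x.1, (b : ℂ) • x.2.1, x.2.2)

/-- An orbit consisting of stable data. -/
def IsStableClass {n : ℕ} (c : ADHMModuli n) : Prop :=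
  ∃ x, IsStableADHM x ∧ Quot.mk (adhmRel n) x = c

/-- An orbit fixed by the two-torus action. -/
def IsFixedClass {n : ℕ} (c : ADHMModuli n) : Prop :=
  ∀ (a b : ℂˣ) (x : ADHMRep n), Quot.mk (adhmRel n) x = c →
    Quot.mk (adhmRel n) (scaleADHM a b x) = c

/-- The canonical operator `X` attached to a Young diagram `Y`:
`X e_{(i,j)} = e_{(i+1,j)}` (and `0` if `(i+1,j) ∉ Y`). -/
noncomputable def youngX (Y : YoungDiagram) : (↥Y.cells → ℂ) →ₗ[ℂ] (↥Y.cells → ℂ) :=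
  Matrix.mulVecLin (Matrix.of fun t s : ↥Y.cells =>
    if (t : ℕ × ℕ).1 = (s : ℕ × ℕ).1 + 1 ∧ (t : ℕ × ℕ).2 = (s : ℕ × ℕ).2 then 1 else 0)

/-- The canonical operator `Y`: `Y e_{(i,j)} = e_{(i,j+1)}`. -/
noncomputable def youngY (Y : YoungDiagram) : (↥Y.cells → ℂ) →ₗ[ℂ] (↥Y.cells → ℂ) :=
  Matrix.mulVecLin (Matrix.of fun t s : ↥Y.cells =>
    if (t : ℕ × ℕ).1 = (s : ℕ × ℕ).1 ∧ (t : ℕ × ℕ).2 = (s : ℕ × ℕ).2 + 1 then 1 else 0)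

/-- The canonical framing vector: `I(1) = e_{(0,0)}`. -/
noncomputable def youngI (Y : YoungDiagram) : ↥Y.cells → ℂ :=
  fun c => if (c : ℕ × ℕ) = (0, 0) then 1 else 0


/-! A torus-fixed stable datum `(X, Y, I)` is conjugate to its rescaling `(2X, 3Y, I)` by some `g`.
Then `g` acts on `X^i Y^j I` by `2^i 3^j`, and these eigenvalues are pairwise distinct, so the
nonzero vectors `X^i Y^j I` are linearly independent; by stability they span `ℂⁿ`. As `X` and `Y`
commute, the `(i, j)` with `X^i Y^j I ≠ 0` form a lower set, i.e. a Young diagram `D` with `n`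
boxes, and in the basis `e_{i,j} = X^i Y^j I` the datum is the normal form of `D`. Conversely the
normal form is stable, the diagonal element `e_{i,j} ↦ a^i b^j e_{i,j}` conjugates it to its
rescaling by `(a, b)`, and `D` is recovered from the orbit as `{(i, j) | X^i Y^j I ≠ 0}`. -/

open Module Submodule

section MonomialVec

variable {R M M' : Type*} [CommSemiring R] [AddCommMonoid M] [Module R M]
  [AddCommMonoid M'] [Module R M']

def monomialVec (X Y : End R M) (v : M) (p : ℕ × ℕ) : M :=
  (X ^ p.1 * Y ^ p.2) v

variable {X Y : End R M} {v : M}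

@[simp]
lemma monomialVec_zero_zero : monomialVec X Y v (0, 0) = v := by
  simp [monomialVec]

lemma apply_monomialVec_left (i j : ℕ) :
    X (monomialVec X Y v (i, j)) = monomialVec X Y v (i + 1, j) := by
  simp [monomialVec, pow_succ', mul_assoc]

lemma apply_monomialVec_right (h : Commute X Y) (i j : ℕ) :
    Y (monomialVec X Y v (i, j)) = monomialVec X Y v (i, j + 1) := by
  simp only [monomialVec, pow_succ', ← End.mul_apply, ← mul_assoc, ((h.pow_left i).symm.eq)]

lemma monomialVec_add (h : Commute X Y) (p q : ℕ × ℕ) :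
    monomialVec X Y v (p + q) = (X ^ q.1 * Y ^ q.2) (monomialVec X Y v p) := by
  simp only [monomialVec, Prod.fst_add, Prod.snd_add, ← End.mul_apply, add_comm p.1, add_comm p.2,
    pow_add, (h.pow_pow p.1 q.2).symm.mul_mul_mul_comm]

lemma monomialVec_smul (a b : R) (p : ℕ × ℕ) :
    monomialVec (a • X) (b • Y) v p = (a ^ p.1 * b ^ p.2) • monomialVec X Y v p := by
  simp [monomialVec, smul_pow, mul_smul, smul_comm (b ^ p.2)]

lemma monomialVec_conj (e : M ≃ₗ[R] M') (p : ℕ × ℕ) :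
    monomialVec (e.toLinearMap ∘ₗ X ∘ₗ e.symm.toLinearMap)
      (e.toLinearMap ∘ₗ Y ∘ₗ e.symm.toLinearMap) (e v) p = e (monomialVec X Y v p) := by
  rw [monomialVec, monomialVec, ← e.conjAlgEquiv_apply (R := R), ← e.conjAlgEquiv_apply (R := R),
    ← map_pow, ← map_pow, ← map_mul, LinearEquiv.conjAlgEquiv_apply]
  simp

lemma isLowerSet_monomialVec_ne_zero (h : Commute X Y) :
    IsLowerSet {p | monomialVec X Y v p ≠ 0} := by
  intro p q hqp hp hq
  obtain ⟨r, rfl⟩ := exists_add_of_le hqp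
  exact hp (by rw [monomialVec_add h, hq, map_zero])

lemma monomialVec_mem {W : Submodule R M} (hv : v ∈ W) (hX : ∀ w ∈ W, X w ∈ W)
    (hY : ∀ w ∈ W, Y w ∈ W) (p : ℕ × ℕ) : monomialVec X Y v p ∈ W :=
  End.pow_apply_mem_of_forall_mem _ hX _ (End.pow_apply_mem_of_forall_mem _ hY _ hv)

lemma span_range_monomialVec_le_comap_left :
    span R (Set.range (monomialVec X Y v)) ≤ (span R (Set.range (monomialVec X Y v))).comap X :=
  span_le.mpr <| Set.range_subset_iff.mpr fun ⟨i, j⟩ => by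
    simpa [apply_monomialVec_left] using subset_span (Set.mem_range_self _)

lemma span_range_monomialVec_le_comap_right (h : Commute X Y) :
    span R (Set.range (monomialVec X Y v)) ≤ (span R (Set.range (monomialVec X Y v))).comap Y :=
  span_le.mpr <| Set.range_subset_iff.mpr fun ⟨i, j⟩ => by
    simpa [apply_monomialVec_right h] using subset_span (Set.mem_range_self _)

end MonomialVec

lemma eq_conj_of_monomialVec {R W M : Type*} [CommSemiring R] [AddCommMonoid W] [Module R W]
    [AddCommMonoid M] [Module R M] (e : W ≃ₗ[R] M) {A B : End R W} {c : W} {X Y : End R M}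
    {v : M} (hAB : Commute A B) (hXY : Commute X Y)
    (hspan : span R (Set.range (monomialVec A B c)) = ⊤)
    (he : ∀ p, e (monomialVec A B c p) = monomialVec X Y v p) :
    X = e.toLinearMap ∘ₗ A ∘ₗ e.symm.toLinearMap ∧
      Y = e.toLinearMap ∘ₗ B ∘ₗ e.symm.toLinearMap ∧ v = e c := by
  have hX : X ∘ₗ e.toLinearMap = e.toLinearMap ∘ₗ A := LinearMap.ext_on_range hspan fun ⟨i, j⟩ => by
    simp [he, apply_monomialVec_left]
  have hY : Y ∘ₗ e.toLinearMap = e.toLinearMap ∘ₗ B := LinearMap.ext_on_range hspan fun ⟨i, j⟩ => by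
    simp [he, apply_monomialVec_right hAB, apply_monomialVec_right hXY]
  refine ⟨?_, ?_, by simpa using (he (0, 0)).symm⟩
  · rwa [← LinearMap.comp_assoc, LinearEquiv.eq_comp_toLinearMap_symm]
  · rwa [← LinearMap.comp_assoc, LinearEquiv.eq_comp_toLinearMap_symm]

lemma two_pow_mul_three_pow_injective {R : Type*} [Semiring R] [CharZero R] :
    Function.Injective fun p : ℕ × ℕ => (2 : R) ^ p.1 * 3 ^ p.2 := by
  rintro ⟨i, j⟩ ⟨k, l⟩ h
  have hℕ : 2 ^ i * 3 ^ j = 2 ^ k * 3 ^ l := Nat.cast_injective (R := R) (by push_cast; exact h)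
  have hik : i = k := by
    simpa [Nat.factorization_mul, Nat.prime_two.factorization, Nat.prime_three.factorization]
      using congrArg (·.factorization 2) hℕ
  have hjl : j = l := by
    simpa [Nat.factorization_mul, Nat.prime_two.factorization, Nat.prime_three.factorization]
      using congrArg (·.factorization 3) hℕ
  rw [hik, hjl]

lemma linearIndependent_monomialVec_of_conj_eq_smul {K M : Type*} [Field K] [AddCommGroup M]
    [Module K M] {X Y : End K M} {v : M} (g : M ≃ₗ[K] M) {a b : K}
    (hab : Function.Injective fun p : ℕ × ℕ => a ^ p.1 * b ^ p.2)
    (hX : g.toLinearMap ∘ₗ X ∘ₗ g.symm.toLinearMap = a • X)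
    (hY : g.toLinearMap ∘ₗ Y ∘ₗ g.symm.toLinearMap = b • Y) (hv : g v = v) :
    LinearIndependent K fun p : {p // monomialVec X Y v p ≠ 0} => monomialVec X Y v p := by
  have hg (p : ℕ × ℕ) : g (monomialVec X Y v p) = (a ^ p.1 * b ^ p.2) • monomialVec X Y v p := by
    rw [← monomialVec_conj, hX, hY, hv, monomialVec_smul]
  exact End.eigenvectors_linearIndependent' g.toLinearMap _ (hab.comp Subtype.val_injective) _
    fun p => End.hasEigenvector_iff.mpr ⟨End.mem_eigenspace_iff.mpr (hg p), p.2⟩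

section Young

variable (D : YoungDiagram)

/-- The basis vector `e_q` of `ℂ^D`, with the convention `e_q = 0` for `q ∉ D`. -/
def cellVec (q : ℕ × ℕ) : D.cells → ℂ :=
  fun s => if (s : ℕ × ℕ) = q then 1 else 0

lemma cellVec_coe (s : D.cells) : cellVec D s = Pi.single s 1 := by
  ext t
  simp only [cellVec, Pi.single_apply, Subtype.ext_iff]

lemma cellVec_eq_zero_iff (q : ℕ × ℕ) : cellVec D q = 0 ↔ q ∉ D := by
  refine ⟨fun h hq => by simpa [cellVec_coe D ⟨q, hq⟩] using congrFun h ⟨q, hq⟩, fun hq => ?_⟩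
  ext s
  simp only [cellVec, Pi.zero_apply, ite_eq_right_iff, one_ne_zero]
  rintro rfl
  exact hq s.2

lemma youngX_cellVec (q : ℕ × ℕ) : youngX D (cellVec D q) = cellVec D (q.1 + 1, q.2) := by
  by_cases hq : q ∈ D
  · obtain ⟨s, rfl⟩ : ∃ s : D.cells, (s : ℕ × ℕ) = q := ⟨⟨q, hq⟩, rfl⟩
    ext t
    simp [youngX, cellVec_coe, Matrix.mulVec_single, cellVec, Prod.ext_iff]
  · have hq' : (q.1 + 1, q.2) ∉ D := fun h => hq (D.up_left_mem (Nat.le_succ _) le_rfl h)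
    rw [(cellVec_eq_zero_iff D q).mpr hq, (cellVec_eq_zero_iff D _).mpr hq', map_zero]

lemma youngY_cellVec (q : ℕ × ℕ) : youngY D (cellVec D q) = cellVec D (q.1, q.2 + 1) := by
  by_cases hq : q ∈ D
  · obtain ⟨s, rfl⟩ : ∃ s : D.cells, (s : ℕ × ℕ) = q := ⟨⟨q, hq⟩, rfl⟩
    ext t
    simp [youngY, cellVec_coe, Matrix.mulVec_single, cellVec, Prod.ext_iff]
  · have hq' : (q.1, q.2 + 1) ∉ D := fun h => hq (D.up_left_mem le_rfl (Nat.le_succ _) h)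
    rw [(cellVec_eq_zero_iff D q).mpr hq, (cellVec_eq_zero_iff D _).mpr hq', map_zero]

lemma commute_youngX_youngY : Commute (youngX D) (youngY D) := by
  refine LinearMap.pi_ext' fun s => LinearMap.ext_ring ?_
  simp [← cellVec_coe, youngX_cellVec, youngY_cellVec]

lemma monomialVec_young (p : ℕ × ℕ) :
    monomialVec (youngX D) (youngY D) (youngI D) p = cellVec D p := by
  obtain ⟨i, j⟩ := p
  induction i with
  | zero =>
    induction j with
    | zero => exact monomialVec_zero_zero
    | succ j ih => rw [← apply_monomialVec_right (commute_youngX_youngY D), ih, youngY_cellVec]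
  | succ i ih => rw [← apply_monomialVec_left, ih, youngX_cellVec]

lemma span_range_monomialVec_young :
    span ℂ (Set.range (monomialVec (youngX D) (youngY D) (youngI D))) = ⊤ := by
  refine eq_top_mono (span_mono ?_) (Pi.basisFun ℂ D.cells).span_eq
  rintro _ ⟨s, rfl⟩
  exact ⟨s, by rw [monomialVec_young, cellVec_coe, Pi.basisFun_apply]⟩

def torusDiag (a b : ℂˣ) : (D.cells → ℂ) ≃ₗ[ℂ] (D.cells → ℂ) :=
  LinearEquiv.piCongrRight fun s => LinearEquiv.smulOfUnit (a ^ (s : ℕ × ℕ).1 * b ^ (s : ℕ × ℕ).2)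

lemma torusDiag_cellVec (a b : ℂˣ) (q : ℕ × ℕ) :
    torusDiag D a b (cellVec D q) = ((a : ℂ) ^ q.1 * (b : ℂ) ^ q.2) • cellVec D q := by
  ext s
  by_cases hs : (s : ℕ × ℕ) = q <;>
    simp [torusDiag, LinearEquiv.smulOfUnit, Units.smul_def, cellVec, hs]

lemma smul_young_eq_conj_torusDiag (a b : ℂˣ) :
    let t := torusDiag D a b
    (a : ℂ) • youngX D = t.toLinearMap ∘ₗ youngX D ∘ₗ t.symm.toLinearMap ∧
      (b : ℂ) • youngY D = t.toLinearMap ∘ₗ youngY D ∘ₗ t.symm.toLinearMap ∧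
      youngI D = t (youngI D) :=
  eq_conj_of_monomialVec _ (commute_youngX_youngY D)
    (((commute_youngX_youngY D).smul_left _).smul_right _) (span_range_monomialVec_young D)
    fun p => by rw [monomialVec_smul, monomialVec_young, torusDiag_cellVec]

lemma exists_linearEquiv_cellVec {M : Type*} [AddCommGroup M] [Module ℂ M] (w : ℕ × ℕ → M)
    (hD : ∀ p, p ∈ D ↔ w p ≠ 0) (hli : LinearIndependent ℂ fun p : {p // w p ≠ 0} => w p)
    (hspan : span ℂ (Set.range w) = ⊤) :
    ∃ e : (D.cells → ℂ) ≃ₗ[ℂ] M, ∀ p, e (cellVec D p) = w p := by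
  classical
  have hliD : LinearIndependent ℂ fun s : D.cells => w s :=
    hli.comp (Equiv.subtypeEquivRight hD) (Equiv.injective _)
  have hspanD : ⊤ ≤ span ℂ (Set.range fun s : D.cells => w s) := by
    rw [← hspan, span_le]
    rintro _ ⟨p, rfl⟩
    by_cases hp : w p = 0
    · simp [hp]
    · exact subset_span ⟨⟨p, (hD p).mpr hp⟩, rfl⟩
  refine ⟨(Basis.mk hliD hspanD).equivFun.symm, fun p => ?_⟩
  by_cases hp : p ∈ D
  · rw [← Subtype.coe_mk p hp, cellVec_coe, Basis.equivFun_symm_single, Basis.mk_apply]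
  · rw [(cellVec_eq_zero_iff D p).mpr hp, map_zero, eq_comm, ← not_ne_iff, ← hD]
    exact hp

end Young

section ADHM

variable {n : ℕ}

lemma adhmRel_equivalence (n : ℕ) : Equivalence (adhmRel n) where
  refl x := ⟨LinearEquiv.refl ℂ _, by ext; simp, by ext; simp, rfl⟩
  symm := by
    rintro x y ⟨g, h1, h2, h3⟩
    exact ⟨g.symm, by ext; simp [h1], by ext; simp [h2], by simp [h3]⟩
  trans := by
    rintro x y z ⟨g, h1, h2, h3⟩ ⟨k, k1, k2, k3⟩
    exact ⟨g.trans k, by ext; simp [h1, k1], by ext; simp [h2, k2], by simp [h3, k3]⟩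

lemma quot_mk_adhmRel_eq_iff {x y : ADHMRep n} :
    Quot.mk (adhmRel n) x = Quot.mk (adhmRel n) y ↔ adhmRel n x y :=
  Quot.eq.trans (adhmRel_equivalence n).eqvGen_iff

lemma adhmRel_scaleADHM (a b : ℂˣ) {x y : ADHMRep n} (h : adhmRel n x y) :
    adhmRel n (scaleADHM a b x) (scaleADHM a b y) := by
  obtain ⟨g, h1, h2, h3⟩ := h
  exact ⟨g, by ext; simp [scaleADHM, h1], by ext; simp [scaleADHM, h2], h3⟩

lemma monomialVec_eq_zero_iff_of_adhmRel {x y : ADHMRep n} (h : adhmRel n x y) (p : ℕ × ℕ) :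
    monomialVec y.1 y.2.1 y.2.2 p = 0 ↔ monomialVec x.1 x.2.1 x.2.2 p = 0 := by
  obtain ⟨g, h1, h2, h3⟩ := h
  rw [h1, h2, h3, monomialVec_conj, LinearEquiv.map_eq_zero_iff]

lemma isStableADHM_iff {x : ADHMRep n} :
    IsStableADHM x ↔
      Commute x.1 x.2.1 ∧ span ℂ (Set.range (monomialVec x.1 x.2.1 x.2.2)) = ⊤ := by
  constructor
  · rintro ⟨hcomm, hstab⟩
    exact ⟨hcomm, hstab _ (subset_span ⟨(0, 0), monomialVec_zero_zero⟩)
      (fun _ hw => span_range_monomialVec_le_comap_left hw)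
      (fun _ hw => span_range_monomialVec_le_comap_right hcomm hw)⟩
  · rintro ⟨hcomm, hspan⟩
    refine ⟨hcomm, fun W hv hX hY => eq_top_iff.mpr ?_⟩
    exact hspan ▸ span_le.mpr (Set.range_subset_iff.mpr (monomialVec_mem hv hX hY))

noncomputable def youngRep (D : YoungDiagram) (e : (D.cells → ℂ) ≃ₗ[ℂ] (Fin n → ℂ)) : ADHMRep n :=
  (e.toLinearMap ∘ₗ youngX D ∘ₗ e.symm.toLinearMap, e.toLinearMap ∘ₗ youngY D ∘ₗ e.symm.toLinearMap,
    e (youngI D))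

lemma YoungDiagram.card_eq_of_linearEquiv {D : YoungDiagram}
    (e : (D.cells → ℂ) ≃ₗ[ℂ] (Fin n → ℂ)) : D.card = n := by
  simpa using LinearEquiv.finrank_eq e

variable (D : YoungDiagram) (e : (D.cells → ℂ) ≃ₗ[ℂ] (Fin n → ℂ))

lemma monomialVec_youngRep (p : ℕ × ℕ) :
    monomialVec (youngRep D e).1 (youngRep D e).2.1 (youngRep D e).2.2 p = e (cellVec D p) := by
  rw [youngRep, monomialVec_conj, monomialVec_young]

lemma adhmRel_youngRep (f : (D.cells → ℂ) ≃ₗ[ℂ] (Fin n → ℂ)) :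
    adhmRel n (youngRep D e) (youngRep D f) :=
  ⟨e.symm.trans f, by ext; simp [youngRep], by ext; simp [youngRep], by simp [youngRep]⟩

lemma isStableADHM_youngRep : IsStableADHM (youngRep D e) := by
  refine isStableADHM_iff.mpr ⟨?_, ?_⟩
  · simpa only [youngRep, ← e.conjAlgEquiv_apply (R := ℂ)] using (commute_youngX_youngY D).map _
  · have hmv : monomialVec (youngRep D e).1 (youngRep D e).2.1 (youngRep D e).2.2 =
        e ∘ monomialVec (youngX D) (youngY D) (youngI D) := funext (monomialVec_conj e)
    rw [hmv, Set.range_comp, span_image_linearEquiv, span_range_monomialVec_young,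
      Submodule.map_top, LinearEquiv.range]

lemma scaleADHM_youngRep (a b : ℂˣ) :
    scaleADHM a b (youngRep D e) = youngRep D ((torusDiag D a b).trans e) := by
  obtain ⟨hX, hY, hI⟩ := smul_young_eq_conj_torusDiag D a b
  refine Prod.ext ?_ (Prod.ext ?_ ?_)
  · refine LinearMap.ext fun w => ?_
    simpa [scaleADHM, youngRep] using congrArg e (LinearMap.congr_fun hX (e.symm w))
  · refine LinearMap.ext fun w => ?_
    simpa [scaleADHM, youngRep] using congrArg e (LinearMap.congr_fun hY (e.symm w))
  · simpa [scaleADHM, youngRep] using congrArg e hI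

lemma isFixedClass_youngRep : IsFixedClass (Quot.mk (adhmRel n) (youngRep D e)) := by
  intro a b x hx
  rw [quot_mk_adhmRel_eq_iff] at hx ⊢
  have h := adhmRel_scaleADHM a b hx
  rw [scaleADHM_youngRep] at h
  exact (adhmRel_equivalence n).trans h (adhmRel_youngRep _ _ _)

lemma eq_of_adhmRel_youngRep {D' : YoungDiagram} {e' : (D'.cells → ℂ) ≃ₗ[ℂ] (Fin n → ℂ)}
    (h : adhmRel n (youngRep D e) (youngRep D' e')) : D = D' := by
  ext p
  have := monomialVec_eq_zero_iff_of_adhmRel h p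
  rw [monomialVec_youngRep, monomialVec_youngRep, LinearEquiv.map_eq_zero_iff,
    LinearEquiv.map_eq_zero_iff, cellVec_eq_zero_iff, cellVec_eq_zero_iff] at this
  exact not_iff_not.mp this.symm

end ADHM

lemma exists_eq_youngRep {n : ℕ} {x : ADHMRep n} (hx : IsStableADHM x)
    (hfix : IsFixedClass (Quot.mk (adhmRel n) x)) :
    ∃ (D : YoungDiagram) (e : (D.cells → ℂ) ≃ₗ[ℂ] (Fin n → ℂ)), x = youngRep D e := by
  obtain ⟨hcomm, hspan⟩ := isStableADHM_iff.mp hx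
  set w := monomialVec x.1 x.2.1 x.2.2
  -- The weights `2^i 3^j` are pairwise distinct, so one torus element separates all `w p`.
  obtain ⟨g, hX, hY, hv⟩ : adhmRel n x
      (scaleADHM (Units.mk0 2 two_ne_zero) (Units.mk0 3 three_ne_zero) x) :=
    quot_mk_adhmRel_eq_iff.mp (hfix _ _ x rfl).symm
  have hli : LinearIndependent ℂ fun p : {p // w p ≠ 0} => w p :=
    linearIndependent_monomialVec_of_conj_eq_smul g two_pow_mul_three_pow_injective
      (by simpa [scaleADHM] using hX.symm) (by simpa [scaleADHM] using hY.symm) hv.symm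
  have hfin : {p | w p ≠ 0}.Finite := Set.finite_coe_iff.mp hli.finite_of_isNoetherian
  let D : YoungDiagram := ⟨hfin.toFinset, by simpa using isLowerSet_monomialVec_ne_zero hcomm⟩
  obtain ⟨e, he⟩ := exists_linearEquiv_cellVec D w (fun p => hfin.mem_toFinset) hli hspan
  obtain ⟨hX', hY', hI'⟩ := eq_conj_of_monomialVec e (commute_youngX_youngY D) hcomm
    (span_range_monomialVec_young D) (by simpa [monomialVec_young] using he)
  exact ⟨D, e, Prod.ext hX' (Prod.ext hY' hI')⟩

/-- **Torus fixed points of the Hilbert scheme of points on `ℂ²`.**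
The torus-fixed `GL_n`-orbits of stable rank-one ADHM data `(X, Y, I)`
(equivalently, fixed points of `Hilbⁿ(ℂ²)`, equivalently monomial ideals of
colength `n` in `ℂ[x,y]`) are in bijection with Young diagrams with `n`
boxes; moreover, the orbit attached to `Y` has a representative in the
normal form `ℂⁿ = ⊕_{(i,j) ∈ Y} ℂ e_{i,j}`, `X e_{i,j} = e_{i+1,j}`,
`Y e_{i,j} = e_{i,j+1}` (zero outside `Y`) and `I(1) = e_{0,0}`. -/
theorem hilbert_scheme_torus_fixed_points (n : ℕ) :
    ∃ F : {Y : YoungDiagram // Y.card = n} ≃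
        {c : ADHMModuli n // IsStableClass c ∧ IsFixedClass c},
      ∀ Yh : {Y : YoungDiagram // Y.card = n},
        ∃ e : (↥Yh.1.cells → ℂ) ≃ₗ[ℂ] (Fin n → ℂ),
          (F Yh : ADHMModuli n) = Quot.mk (adhmRel n)
            (e.toLinearMap ∘ₗ youngX Yh.1 ∘ₗ e.symm.toLinearMap,
             e.toLinearMap ∘ₗ youngY Yh.1 ∘ₗ e.symm.toLinearMap,
             e (youngI Yh.1)) := by
  let e (Yh : {Y : YoungDiagram // Y.card = n}) : (Yh.1.cells → ℂ) ≃ₗ[ℂ] (Fin n → ℂ) :=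
    LinearEquiv.funCongrLeft ℂ ℂ (Fintype.equivFinOfCardEq (by simpa using Yh.2)).symm
  let F (Yh : {Y : YoungDiagram // Y.card = n}) :
      {c : ADHMModuli n // IsStableClass c ∧ IsFixedClass c} :=
    ⟨_, ⟨_, isStableADHM_youngRep Yh.1 (e Yh), rfl⟩, isFixedClass_youngRep Yh.1 (e Yh)⟩
  have hF : Function.Bijective F := by
    refine ⟨fun Y₁ Y₂ h => Subtype.ext (eq_of_adhmRel_youngRep _ _
      (quot_mk_adhmRel_eq_iff.mp (congrArg Subtype.val h))), ?_⟩
    rintro ⟨c, ⟨x, hx, rfl⟩, hfix⟩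
    obtain ⟨D, e', rfl⟩ := exists_eq_youngRep hx hfix
    exact ⟨⟨D, YoungDiagram.card_eq_of_linearEquiv e'⟩,
      Subtype.ext (quot_mk_adhmRel_eq_iff.mpr (adhmRel_youngRep _ _ _))⟩
  exact ⟨Equiv.ofBijective F hF, fun Yh => ⟨e Yh, rfl⟩⟩
end
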